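/- Let G be a finite {C4, C5}-free simple graph containing six distinct vertices u, v, u₁, v₁, v₂, v₃ such that uv is an edge, v v₁ v₂ is a triangle, v₂ v₃ u₁ is a triangle, and the degrees in G satisfy deg(u) = deg(u₁) = 3 and deg(v) = deg(v₁) = deg(v₂) = deg(v₃) = 4. Then the subgraph of G induced by {u, v, u₁, v₁, v₂, v₃} is (P3+P4, 4)-reducible in G; in particular, G contains a (P3+P4, 4)-reducible induced subgraph with at most 6 vertices. -/

import Mathlib

/-!
Colour the six vertices greedily from their lists, one at a time: a vertex `w` can be
coloured as long as it has more colours than coloured neighbours. Since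
`|L(w)| ≥ deg_H(w) + δ(w) - 1_S(w)`, with `δ = 1` at `u, u₁` and `δ = 0` at the degree-4
vertices, this holds as soon as at least `1 - δ(w) + 1_S(w)` neighbours of `w` are still
uncoloured. For each root of (FIX), which is coloured first, and for each of the four shapes a
(P3+P4)-independent set can take in `H`, one of six orders of the vertices has this property.
-/

open Finset

/-- The restriction of a graph `G` to a vertex set `A`, viewed as a graph on the same
vertex type: the edges of `G` with both endpoints in `A`. -/
def gOn {V : Type*} (G : SimpleGraph V) (A : Set V) : SimpleGraph V where
  Adj u v := u ∈ A ∧ v ∈ A ∧ G.Adj u v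
  symm := ⟨fun u v ⟨ha, hb, h⟩ => ⟨hb, ha, h.symm⟩⟩
  loopless := ⟨fun v h => G.loopless.irrefl v h.2.2⟩

/-- The degree of a vertex `v` in `G`. -/
noncomputable def ndeg {V : Type*} (G : SimpleGraph V) (v : V) : ℕ :=
  {w | G.Adj v w}.ncard

/-- The degree of a vertex `v` in the subgraph of `G` induced on `A`. -/
noncomputable def degOn {V : Type*} (G : SimpleGraph V) (A : Set V) (v : V) : ℕ :=
  {w ∈ A | G.Adj v w}.ncard

/-- The subgraph of `G` induced on `A` has a proper coloring from the lists `L`. -/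
def ColorableOn {V α : Type*} (G : SimpleGraph V) (A : Set V) (L : V → Finset α) : Prop :=
  ∃ φ : V → α, (∀ v ∈ A, φ v ∈ L v) ∧ ∀ u ∈ A, ∀ w ∈ A, G.Adj u w → φ u ≠ φ w

/-- `φ` is a proper coloring of `G` with `φ v ∈ L v` for every vertex `v`. -/
def IsLColoring {V α : Type*} (G : SimpleGraph V) (L : V → Finset α) (φ : V → α) : Prop :=
  (∀ v, φ v ∈ L v) ∧ ∀ ⦃u w⦄, G.Adj u w → φ u ≠ φ w

/-- `S` is `(P3+P4)`-independent in `H`: there is no path on 3 vertices (length 2) and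
no path on 4 vertices (length 3) in `H` whose two endpoints both belong to `S`. -/
def P34Indep {V : Type*} (H : SimpleGraph V) (S : Set V) : Prop :=
  ∀ u ∈ S, ∀ v ∈ S, ∀ p : H.Walk u v, p.IsPath → p.length ≠ 2 ∧ p.length ≠ 3

/-- `G` contains no cycle of length 4 and no cycle of length 5. -/
def C45Free {V : Type*} (G : SimpleGraph V) : Prop :=
  ∀ (v : V) (c : G.Walk v v), c.IsCycle → c.length ≠ 4 ∧ c.length ≠ 5

/-- Condition (FIX) for the subgraph of `G` induced on `A`, with parameter `k`. -/
def FIX {V : Type*} (G : SimpleGraph V) (A : Set V) (k : ℕ) : Prop :=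
  ∀ v ∈ A, ∀ L : V → Finset ℕ,
    1 ≤ (L v).card →
    (∀ w ∈ A, w ≠ v → (degOn G A w : ℤ) + k - ndeg G w ≤ (L w).card) →
    ColorableOn G A L

/-- Condition (FORB) for the subgraph of `G` induced on `A`, with parameter `k`. -/
def FORB {V : Type*} (G : SimpleGraph V) (A : Set V) (k : ℕ) : Prop :=
  ∀ S : Set V, S ⊆ A → P34Indep (gOn G A) S → S.ncard ≤ k - 2 →
    ∀ L : V → Finset ℕ,
      (∀ w ∈ A,
        (degOn G A w : ℤ) + k - ndeg G w - S.indicator (fun _ => (1 : ℤ)) w ≤ (L w).card) →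
      ColorableOn G A L

/-- The subgraph of `G` induced on `A` is `(P3+P4, k)`-reducible in `G`. -/
def Reducible {V : Type*} (G : SimpleGraph V) (A : Set V) (k : ℕ) : Prop :=
  FIX G A k ∧ FORB G A k

/-- `G` with the list assignment `L` is weighted `ε`-flexible. -/
def WeightedFlexible {V α : Type*} [Fintype V] (G : SimpleGraph V)
    (L : V → Finset α) (ε : ℝ) : Prop :=
  ∀ w : V → α → ℝ, (∀ v, ∀ c ∈ L v, 0 ≤ w v c) →
    ∃ φ : V → α, IsLColoring G L φ ∧
      ε * (∑ v, ∑ c ∈ L v, w v c) ≤ ∑ v, w v (φ v)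

section Greedy

variable {V α : Type*} {G : SimpleGraph V} {A B : Set V} {L : V → Finset α} {x y z : V}

theorem degOn_mono (hBA : B ⊆ A) (hA : A.Finite := by toFinite_tac) :
    degOn G B x ≤ degOn G A x :=
  Set.ncard_le_ncard (fun _ hw => ⟨hBA hw.1, hw.2⟩) (hA.sep _)

theorem degOn_lt_degOn (hBA : B ⊆ A) (hy : y ∈ A \ B) (hxy : G.Adj x y)
    (hA : A.Finite := by toFinite_tac) : degOn G B x < degOn G A x :=
  Set.ncard_lt_ncard ⟨fun _ hw => ⟨hBA hw.1, hw.2⟩, fun h => hy.2 (h ⟨hy.1, hxy⟩).1⟩ (hA.sep _)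

theorem degOn_add_two_le (hBA : B ⊆ A) (hy : y ∈ A \ B) (hz : z ∈ A \ B) (hyz : y ≠ z)
    (hxy : G.Adj x y) (hxz : G.Adj x z) (hA : A.Finite := by toFinite_tac) :
    degOn G B x + 2 ≤ degOn G A x := by
  have hyBA : insert y B ⊆ A := Set.insert_subset hy.1 hBA
  have h₁ := degOn_lt_degOn (Set.subset_insert y B) ⟨Set.mem_insert y B, hy.2⟩ hxy
    (hA.subset hyBA)
  have h₂ := degOn_lt_degOn hyBA ⟨hz.1, by simp [hyz.symm, hz.2]⟩ hxz hA
  omega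

theorem degOn_pos (hy : y ∈ A) (hxy : G.Adj x y) (hA : A.Finite := by toFinite_tac) :
    0 < degOn G A x :=
  (Set.ncard_pos (hA.sep _)).mpr ⟨y, hy, hxy⟩

theorem one_lt_degOn (hy : y ∈ A) (hz : z ∈ A) (hyz : y ≠ z) (hxy : G.Adj x y)
    (hxz : G.Adj x z) (hA : A.Finite := by toFinite_tac) : 1 < degOn G A x :=
  (Set.one_lt_ncard_iff (hA.sep _)).mpr ⟨y, z, ⟨hy, hxy⟩, ⟨hz, hxz⟩, hyz⟩

theorem colorableOn_singleton (hx : 0 < (L x).card) : ColorableOn G {x} L := by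
  obtain ⟨c, hc⟩ := Finset.card_pos.mp hx
  exact ⟨fun _ => c, by simpa using hc, by simp⟩

theorem ColorableOn.insert_of_degOn_lt (hB : ColorableOn G B L) (hx : degOn G B x < (L x).card)
    (hfin : B.Finite := by toFinite_tac) : ColorableOn G (insert x B) L := by
  classical
  obtain ⟨φ, hφL, hφ⟩ := hB
  set N := {w ∈ B | G.Adj x w}
  obtain ⟨c, hcL, hcN⟩ : ∃ c ∈ L x, c ∉ φ '' N := by
    by_contra! h
    have := (Set.ncard_le_ncard (s := ↑(L x)) (fun c hc => h c hc) ((hfin.sep _).image φ)).trans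
      (Set.ncard_image_le (hfin.sep _))
    rw [Set.ncard_coe_finset] at this
    exact absurd hx (not_lt.mpr this)
  have hc : ∀ w ∈ B, G.Adj x w → c ≠ Function.update φ x c w := fun w hw hxw h =>
    hcN ⟨w, ⟨hw, hxw⟩, by rw [h, Function.update_of_ne hxw.ne']⟩
  refine ⟨Function.update φ x c, fun w hw => ?_, fun a ha b hb hab => ?_⟩
  · rcases eq_or_ne w x with rfl | hwx
    · simpa using hcL
    · simpa [hwx] using hφL w (hw.resolve_left hwx)
  rcases eq_or_ne a x with rfl | hax
  · simpa using hc b (hb.resolve_left hab.ne') hab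
  rcases eq_or_ne b x with rfl | hbx
  · simpa [eq_comm] using hc a (ha.resolve_left hax) hab.symm
  simpa [hax, hbx] using hφ a (ha.resolve_left hax) b (hb.resolve_left hbx) hab

theorem ColorableOn.insert_of_subset (hB : ColorableOn G B L) (hBA : B ⊆ A)
    (hx : degOn G A x < (L x).card) (hA : A.Finite := by toFinite_tac) :
    ColorableOn G (insert x B) L :=
  hB.insert_of_degOn_lt ((degOn_mono hBA hA).trans_lt hx) (hA.subset hBA)

theorem ColorableOn.insert_of_adj (hB : ColorableOn G B L) (hBA : B ⊆ A) (hy : y ∈ A \ B)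
    (hxy : G.Adj x y) (hx : degOn G A x < (L x).card + 1) (hA : A.Finite := by toFinite_tac) :
    ColorableOn G (insert x B) L :=
  hB.insert_of_degOn_lt (by have := degOn_lt_degOn hBA hy hxy hA; omega) (hA.subset hBA)

theorem ColorableOn.insert_of_adj₂ (hB : ColorableOn G B L) (hBA : B ⊆ A) (hy : y ∈ A \ B)
    (hz : z ∈ A \ B) (hyz : y ≠ z) (hxy : G.Adj x y) (hxz : G.Adj x z)
    (hx : degOn G A x < (L x).card + 2) (hA : A.Finite := by toFinite_tac) :
    ColorableOn G (insert x B) L :=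
  hB.insert_of_degOn_lt (by have := degOn_add_two_le hBA hy hz hyz hxy hxz hA; omega)
    (hA.subset hBA)

end Greedy

section P34Indep

variable {V : Type*} {H : SimpleGraph V} {S : Set V} {a b m n : V}

theorem P34Indep.notMem_of_adj_adj (hS : P34Indep H S) (hb : b ∈ S) (hab : a ≠ b)
    (h₁ : H.Adj a m) (h₂ : H.Adj m b) : a ∉ S := fun ha =>
  (hS a ha b hb (.cons h₁ (.cons h₂ .nil)) (by simp [h₁.ne, h₂.ne, hab])).1 rfl

theorem P34Indep.notMem_of_adj_adj_adj (hS : P34Indep H S) (hb : b ∈ S) (hab : a ≠ b)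
    (han : a ≠ n) (hmb : m ≠ b) (h₁ : H.Adj a m) (h₂ : H.Adj m n) (h₃ : H.Adj n b) :
    a ∉ S := fun ha =>
  (hS a ha b hb (.cons h₁ (.cons h₂ (.cons h₃ .nil)))
    (by simp [h₁.ne, h₂.ne, h₃.ne, hab, han, hmb])).2 rfl

end P34Indep

structure IsEdge34Config {V : Type*} (G : SimpleGraph V) (u v u₁ v₁ v₂ v₃ : V) : Prop where
  distinct : [u, v, u₁, v₁, v₂, v₃].Pairwise (· ≠ ·)
  adj_u_v : G.Adj u v
  adj_v_v₁ : G.Adj v v₁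
  adj_v₁_v₂ : G.Adj v₁ v₂
  adj_v₂_v : G.Adj v₂ v
  adj_v₂_v₃ : G.Adj v₂ v₃
  adj_v₃_u₁ : G.Adj v₃ u₁
  adj_u₁_v₂ : G.Adj u₁ v₂

namespace IsEdge34Config

variable {V α : Type*} {G : SimpleGraph V} {L : V → Finset α} {u v u₁ v₁ v₂ v₃ : V}

theorem distinct' (hC : IsEdge34Config G u v u₁ v₁ v₂ v₃) :
    u ≠ v ∧ u ≠ u₁ ∧ u ≠ v₁ ∧ u ≠ v₂ ∧ u ≠ v₃ ∧ v ≠ u₁ ∧ v ≠ v₁ ∧ v ≠ v₂ ∧ v ≠ v₃ ∧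
      u₁ ≠ v₁ ∧ u₁ ≠ v₂ ∧ u₁ ≠ v₃ ∧ v₁ ≠ v₂ ∧ v₁ ≠ v₃ ∧ v₂ ≠ v₃ := by
  simpa [and_assoc] using hC.distinct

/- In `colorableOn_root_x` the vertex `x` is coloured first and the others follow in the order
of the `insert` chain. A bound `degOn G A w < (L w).card + k` allows the list of `w` to fall short of its degree
in the configuration by the number `k` of neighbours of `w` coloured after it. -/
theorem colorableOn_root_u (hC : IsEdge34Config G u v u₁ v₁ v₂ v₃) (hu : 0 < (L u).card)
    (hv : degOn G {u, v, u₁, v₁, v₂, v₃} v < (L v).card + 2)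
    (hv₁ : degOn G {u, v, u₁, v₁, v₂, v₃} v₁ < (L v₁).card + 1)
    (hv₂ : degOn G {u, v, u₁, v₁, v₂, v₃} v₂ < (L v₂).card + 2)
    (hv₃ : degOn G {u, v, u₁, v₁, v₂, v₃} v₃ < (L v₃).card + 1)
    (hu₁ : degOn G {u, v, u₁, v₁, v₂, v₃} u₁ < (L u₁).card) :
    ColorableOn G {u, v, u₁, v₁, v₂, v₃} L := by
  have := hC.distinct'
  rw [show ({u, v, u₁, v₁, v₂, v₃} : Set V) = {u₁, v₃, v₂, v₁, v, u} by
    ext; simp only [Set.mem_insert_iff, Set.mem_singleton_iff, or_comm, or_left_comm]]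
  refine colorableOn_singleton hu
    |>.insert_of_adj₂ ?_ ?_ ?_ ?_ hC.adj_v_v₁ hC.adj_v₂_v.symm hv
    |>.insert_of_adj ?_ ?_ hC.adj_v₁_v₂ hv₁
    |>.insert_of_adj₂ ?_ ?_ ?_ ?_ hC.adj_v₂_v₃ hC.adj_u₁_v₂.symm hv₂
    |>.insert_of_adj ?_ ?_ hC.adj_v₃_u₁ hv₃
    |>.insert_of_subset ?_ hu₁
  all_goals grind [Set.insert_subset_iff]

theorem colorableOn_root_v (hC : IsEdge34Config G u v u₁ v₁ v₂ v₃)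
    (hv : 0 < (L v).card)
    (hu : degOn G {u, v, u₁, v₁, v₂, v₃} u < (L u).card)
    (hu₁ : degOn G {u, v, u₁, v₁, v₂, v₃} u₁ < (L u₁).card)
    (hv₁ : degOn G {u, v, u₁, v₁, v₂, v₃} v₁ < (L v₁).card + 1)
    (hv₂ : degOn G {u, v, u₁, v₁, v₂, v₃} v₂ < (L v₂).card + 1)
    (hv₃ : degOn G {u, v, u₁, v₁, v₂, v₃} v₃ < (L v₃).card + 1) :
    ColorableOn G {u, v, u₁, v₁, v₂, v₃} L := by
  have := hC.distinct'
  rw [show ({u, v, u₁, v₁, v₂, v₃} : Set V) = {u₁, v₃, v₂, u, v₁, v} by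
    ext; simp only [Set.mem_insert_iff, Set.mem_singleton_iff, or_comm, or_left_comm]]
  refine colorableOn_singleton hv
    |>.insert_of_adj ?_ ?_ hC.adj_v₁_v₂ hv₁
    |>.insert_of_subset ?_ hu
    |>.insert_of_adj ?_ ?_ hC.adj_v₂_v₃ hv₂
    |>.insert_of_adj ?_ ?_ hC.adj_v₃_u₁ hv₃
    |>.insert_of_subset ?_ hu₁
  all_goals grind [Set.insert_subset_iff]

theorem colorableOn_root_v₁ (hC : IsEdge34Config G u v u₁ v₁ v₂ v₃)
    (hv₁ : 0 < (L v₁).card)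
    (hu : degOn G {u, v, u₁, v₁, v₂, v₃} u < (L u).card)
    (hv : degOn G {u, v, u₁, v₁, v₂, v₃} v < (L v).card + 2)
    (hu₁ : degOn G {u, v, u₁, v₁, v₂, v₃} u₁ < (L u₁).card)
    (hv₂ : degOn G {u, v, u₁, v₁, v₂, v₃} v₂ < (L v₂).card + 2)
    (hv₃ : degOn G {u, v, u₁, v₁, v₂, v₃} v₃ < (L v₃).card + 1) :
    ColorableOn G {u, v, u₁, v₁, v₂, v₃} L := by
  have := hC.distinct'
  rw [show ({u, v, u₁, v₁, v₂, v₃} : Set V) = {u₁, v₃, v₂, u, v, v₁} by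
    ext; simp only [Set.mem_insert_iff, Set.mem_singleton_iff, or_comm, or_left_comm]]
  refine colorableOn_singleton hv₁
    |>.insert_of_adj₂ ?_ ?_ ?_ ?_ hC.adj_u_v.symm hC.adj_v₂_v.symm hv
    |>.insert_of_subset ?_ hu
    |>.insert_of_adj₂ ?_ ?_ ?_ ?_ hC.adj_v₂_v₃ hC.adj_u₁_v₂.symm hv₂
    |>.insert_of_adj ?_ ?_ hC.adj_v₃_u₁ hv₃
    |>.insert_of_subset ?_ hu₁
  all_goals grind [Set.insert_subset_iff]

theorem colorableOn_root_v₂ (hC : IsEdge34Config G u v u₁ v₁ v₂ v₃)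
    (hv₂ : 0 < (L v₂).card)
    (hu : degOn G {u, v, u₁, v₁, v₂, v₃} u < (L u).card)
    (hv : degOn G {u, v, u₁, v₁, v₂, v₃} v < (L v).card + 1)
    (hu₁ : degOn G {u, v, u₁, v₁, v₂, v₃} u₁ < (L u₁).card)
    (hv₁ : degOn G {u, v, u₁, v₁, v₂, v₃} v₁ < (L v₁).card + 1)
    (hv₃ : degOn G {u, v, u₁, v₁, v₂, v₃} v₃ < (L v₃).card + 1) :
    ColorableOn G {u, v, u₁, v₁, v₂, v₃} L := by
  have := hC.distinct'
  rw [show ({u, v, u₁, v₁, v₂, v₃} : Set V) = {u₁, v₃, u, v, v₁, v₂} by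
    ext; simp only [Set.mem_insert_iff, Set.mem_singleton_iff, or_comm, or_left_comm]]
  refine colorableOn_singleton hv₂
    |>.insert_of_adj ?_ ?_ hC.adj_v_v₁.symm hv₁
    |>.insert_of_adj ?_ ?_ hC.adj_u_v.symm hv
    |>.insert_of_subset ?_ hu
    |>.insert_of_adj ?_ ?_ hC.adj_v₃_u₁ hv₃
    |>.insert_of_subset ?_ hu₁
  all_goals grind [Set.insert_subset_iff]

theorem colorableOn_root_v₃ (hC : IsEdge34Config G u v u₁ v₁ v₂ v₃)
    (hv₃ : 0 < (L v₃).card)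
    (hu : degOn G {u, v, u₁, v₁, v₂, v₃} u < (L u).card)
    (hv : degOn G {u, v, u₁, v₁, v₂, v₃} v < (L v).card + 1)
    (hu₁ : degOn G {u, v, u₁, v₁, v₂, v₃} u₁ < (L u₁).card)
    (hv₁ : degOn G {u, v, u₁, v₁, v₂, v₃} v₁ < (L v₁).card + 1)
    (hv₂ : degOn G {u, v, u₁, v₁, v₂, v₃} v₂ < (L v₂).card + 2) :
    ColorableOn G {u, v, u₁, v₁, v₂, v₃} L := by
  have := hC.distinct'
  rw [show ({u, v, u₁, v₁, v₂, v₃} : Set V) = {u₁, u, v, v₁, v₂, v₃} by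
    ext; simp only [Set.mem_insert_iff, Set.mem_singleton_iff, or_left_comm]]
  refine colorableOn_singleton hv₃
    |>.insert_of_adj₂ ?_ ?_ ?_ ?_ hC.adj_v₁_v₂.symm hC.adj_v₂_v hv₂
    |>.insert_of_adj ?_ ?_ hC.adj_v_v₁.symm hv₁
    |>.insert_of_adj ?_ ?_ hC.adj_u_v.symm hv
    |>.insert_of_subset ?_ hu
    |>.insert_of_subset ?_ hu₁
  all_goals grind [Set.insert_subset_iff]

theorem colorableOn_root_u₁ (hC : IsEdge34Config G u v u₁ v₁ v₂ v₃)
    (hu₁ : 0 < (L u₁).card)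
    (hu : degOn G {u, v, u₁, v₁, v₂, v₃} u < (L u).card)
    (hv : degOn G {u, v, u₁, v₁, v₂, v₃} v < (L v).card + 1)
    (hv₁ : degOn G {u, v, u₁, v₁, v₂, v₃} v₁ < (L v₁).card + 1)
    (hv₂ : degOn G {u, v, u₁, v₁, v₂, v₃} v₂ < (L v₂).card + 2)
    (hv₃ : degOn G {u, v, u₁, v₁, v₂, v₃} v₃ < (L v₃).card + 1) :
    ColorableOn G {u, v, u₁, v₁, v₂, v₃} L := by
  have := hC.distinct'
  rw [show ({u, v, u₁, v₁, v₂, v₃} : Set V) = {u, v, v₁, v₂, v₃, u₁} by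
    ext; simp only [Set.mem_insert_iff, Set.mem_singleton_iff, or_comm, or_left_comm]]
  refine colorableOn_singleton hu₁
    |>.insert_of_adj ?_ ?_ hC.adj_v₂_v₃.symm hv₃
    |>.insert_of_adj₂ ?_ ?_ ?_ ?_ hC.adj_v₁_v₂.symm hC.adj_v₂_v hv₂
    |>.insert_of_adj ?_ ?_ hC.adj_v_v₁.symm hv₁
    |>.insert_of_adj ?_ ?_ hC.adj_u_v.symm hv
    |>.insert_of_subset ?_ hu
  all_goals grind [Set.insert_subset_iff]

theorem subset_of_p34Indep (hC : IsEdge34Config G u v u₁ v₁ v₂ v₃) {S : Set V}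
    (hSA : S ⊆ {u, v, u₁, v₁, v₂, v₃}) (hS : P34Indep (gOn G {u, v, u₁, v₁, v₂, v₃}) S) :
    S ⊆ {v₂, v₃} ∨ S ⊆ {u₁, v₂} ∨ S ⊆ {v, v₁, v₂} ∨ S ⊆ {u, v, v₂} := by
  have := hC.distinct'
  set A : Set V := {u, v, u₁, v₁, v₂, v₃} with hA
  have huv : (gOn G A).Adj u v := ⟨by simp [hA], by simp [hA], hC.adj_u_v⟩
  have hvv₁ : (gOn G A).Adj v v₁ := ⟨by simp [hA], by simp [hA], hC.adj_v_v₁⟩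
  have hv₁v₂ : (gOn G A).Adj v₁ v₂ := ⟨by simp [hA], by simp [hA], hC.adj_v₁_v₂⟩
  have hvv₂ : (gOn G A).Adj v v₂ := ⟨by simp [hA], by simp [hA], hC.adj_v₂_v.symm⟩
  have hv₂v₃ : (gOn G A).Adj v₂ v₃ := ⟨by simp [hA], by simp [hA], hC.adj_v₂_v₃⟩
  have hv₂u₁ : (gOn G A).Adj v₂ u₁ := ⟨by simp [hA], by simp [hA], hC.adj_u₁_v₂.symm⟩
  have nv₃u : v₃ ∈ S → u ∉ S := fun h =>
    hS.notMem_of_adj_adj_adj h (by grind) (by grind) (by grind) huv hvv₂ hv₂v₃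
  have nv₃v : v₃ ∈ S → v ∉ S := fun h => hS.notMem_of_adj_adj h (by grind) hvv₂ hv₂v₃
  have nv₃v₁ : v₃ ∈ S → v₁ ∉ S := fun h => hS.notMem_of_adj_adj h (by grind) hv₁v₂ hv₂v₃
  have nv₃u₁ : v₃ ∈ S → u₁ ∉ S := fun h => hS.notMem_of_adj_adj h (by grind) hv₂u₁.symm hv₂v₃
  have nu₁u : u₁ ∈ S → u ∉ S := fun h =>
    hS.notMem_of_adj_adj_adj h (by grind) (by grind) (by grind) huv hvv₂ hv₂u₁
  have nu₁v : u₁ ∈ S → v ∉ S := fun h => hS.notMem_of_adj_adj h (by grind) hvv₂ hv₂u₁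
  have nu₁v₁ : u₁ ∈ S → v₁ ∉ S := fun h => hS.notMem_of_adj_adj h (by grind) hv₁v₂ hv₂u₁
  have nv₁u : v₁ ∈ S → u ∉ S := fun h => hS.notMem_of_adj_adj h (by grind) huv hvv₁
  simp only [hA, Set.subset_def, Set.mem_insert_iff, Set.mem_singleton_iff] at hSA ⊢
  grind

theorem fix (hC : IsEdge34Config G u v u₁ v₁ v₂ v₃) (hdu : ndeg G u ≤ 3)
    (hdu₁ : ndeg G u₁ ≤ 3) (hdv : ndeg G v ≤ 4) (hdv₁ : ndeg G v₁ ≤ 4) (hdv₂ : ndeg G v₂ ≤ 4)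
    (hdv₃ : ndeg G v₃ ≤ 4) : FIX G {u, v, u₁, v₁, v₂, v₃} 4 := by
  set A : Set V := {u, v, u₁, v₁, v₂, v₃} with hA
  intro r hr L hr₁ hL
  have key : ∀ w ∈ A, w ≠ r → degOn G A w < (L w).card + (ndeg G w - 3) := fun w hw hwr => by
    have := hL w hw hwr
    omega
  have := hC.distinct'
  simp only [hA, Set.mem_insert_iff, Set.mem_singleton_iff] at hr
  rcases hr with rfl | rfl | rfl | rfl | rfl | rfl <;>
    [apply hC.colorableOn_root_u hr₁; apply hC.colorableOn_root_v hr₁;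
      apply hC.colorableOn_root_u₁ hr₁; apply hC.colorableOn_root_v₁ hr₁;
      apply hC.colorableOn_root_v₂ hr₁; apply hC.colorableOn_root_v₃ hr₁] <;>
    exact (key _ (by simp [hA]) (by grind)).trans_le (by omega)

theorem forb (hC : IsEdge34Config G u v u₁ v₁ v₂ v₃) (hdu : ndeg G u ≤ 3)
    (hdu₁ : ndeg G u₁ ≤ 3) (hdv : ndeg G v ≤ 4) (hdv₁ : ndeg G v₁ ≤ 4) (hdv₂ : ndeg G v₂ ≤ 4)
    (hdv₃ : ndeg G v₃ ≤ 4) : FORB G {u, v, u₁, v₁, v₂, v₃} 4 := by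
  set A : Set V := {u, v, u₁, v₁, v₂, v₃} with hA
  intro S hSA hS _ L hL
  have key₀ : ∀ w ∈ A, w ∉ S → degOn G A w < (L w).card + (ndeg G w - 3) := fun w hw hwS => by
    have := hL w hw
    rw [Set.indicator_of_notMem hwS] at this
    omega
  have key₁ : ∀ w ∈ A, degOn G A w < (L w).card + (ndeg G w - 3) + 1 := fun w hw => by
    have := hL w hw
    have : S.indicator (fun _ => (1 : ℤ)) w ≤ 1 := Set.indicator_le_self' (by simp) w
    omega
  have pos : ∀ w ∈ A, ndeg G w - 3 < degOn G A w → 0 < (L w).card := fun w hw h => by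
    have := key₁ w hw
    omega
  have := hC.distinct'
  have hu : 0 < (L u).card := pos u (by simp [hA]) <| by
    have := degOn_pos (G := G) (A := A) (by simp [hA]) hC.adj_u_v
    omega
  have hu₁ : 0 < (L u₁).card := pos u₁ (by simp [hA]) <| by
    have := degOn_pos (G := G) (A := A) (by simp [hA]) hC.adj_u₁_v₂
    omega
  have hv₁ : 0 < (L v₁).card := pos v₁ (by simp [hA]) <| by
    have := one_lt_degOn (A := A) (by simp [hA]) (by simp [hA]) (by grind) hC.adj_v_v₁.symm
      hC.adj_v₁_v₂
    omega
  have hv₃ : 0 < (L v₃).card := pos v₃ (by simp [hA]) <| by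
    have := one_lt_degOn (A := A) (by simp [hA]) (by simp [hA]) (by grind) hC.adj_v₂_v₃.symm
      hC.adj_v₃_u₁
    omega
  rcases hC.subset_of_p34Indep hSA hS with hT | hT | hT | hT <;>
    [apply hC.colorableOn_root_v₃ hv₃; apply hC.colorableOn_root_u₁ hu₁;
      apply hC.colorableOn_root_v₁ hv₁; apply hC.colorableOn_root_u hu] <;>
    first
    | exact (key₁ _ (by simp [hA])).trans_le (by omega)
    | exact (key₀ _ (by simp [hA]) fun h => by grind).trans_le (by omega)

end IsEdge34Config

theorem reducible_34edge_general {V : Type} (G : SimpleGraph V)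
    (u v u₁ v₁ v₂ v₃ : V)
    (hdist : ([u, v, u₁, v₁, v₂, v₃] : List V).Pairwise (· ≠ ·))
    (huv : G.Adj u v)
    (htri₁ : G.Adj v v₁ ∧ G.Adj v₁ v₂ ∧ G.Adj v₂ v)
    (htri₂ : G.Adj v₂ v₃ ∧ G.Adj v₃ u₁ ∧ G.Adj u₁ v₂)
    (hdu : ndeg G u = 3) (hdu₁ : ndeg G u₁ = 3)
    (hdv : ndeg G v = 4) (hdv₁ : ndeg G v₁ = 4)
    (hdv₂ : ndeg G v₂ = 4) (hdv₃ : ndeg G v₃ = 4) :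
    Reducible G ({u, v, u₁, v₁, v₂, v₃} : Set V) 4 ∧
      ∃ A : Set V, A.Nonempty ∧ A.ncard ≤ 6 ∧ Reducible G A 4 := by
  have hC : IsEdge34Config G u v u₁ v₁ v₂ v₃ :=
    ⟨hdist, huv, htri₁.1, htri₁.2.1, htri₁.2.2, htri₂.1, htri₂.2.1, htri₂.2.2⟩
  have hR : Reducible G {u, v, u₁, v₁, v₂, v₃} 4 :=
    ⟨hC.fix hdu.le hdu₁.le hdv.le hdv₁.le hdv₂.le hdv₃.le,
      hC.forb hdu.le hdu₁.le hdv.le hdv₁.le hdv₂.le hdv₃.le⟩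
  classical
  refine ⟨hR, _, ⟨u, by simp⟩, ?_, hR⟩
  simpa using (Set.ncard_coe_finset ({u, v, u₁, v₁, v₂, v₃} : Finset V)).trans_le
    Finset.card_le_six

/-- (Lemma on the 3-4 edge.) In a `{C4, C5}`-free graph with the given
configuration, the induced subgraph on `{u, v, u₁, v₁, v₂, v₃}` is `(P3+P4, 4)`-reducible;
in particular `G` contains a `(P3+P4, 4)`-reducible induced subgraph on at most 6 vertices. -/
theorem reducible_34edge {V : Type} [Fintype V] (G : SimpleGraph V) (hfree : C45Free G)
    (u v u₁ v₁ v₂ v₃ : V)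
    (hdist : ([u, v, u₁, v₁, v₂, v₃] : List V).Pairwise (· ≠ ·))
    (huv : G.Adj u v)
    (htri₁ : G.Adj v v₁ ∧ G.Adj v₁ v₂ ∧ G.Adj v₂ v)
    (htri₂ : G.Adj v₂ v₃ ∧ G.Adj v₃ u₁ ∧ G.Adj u₁ v₂)
    (hdu : ndeg G u = 3) (hdu₁ : ndeg G u₁ = 3)
    (hdv : ndeg G v = 4) (hdv₁ : ndeg G v₁ = 4)
    (hdv₂ : ndeg G v₂ = 4) (hdv₃ : ndeg G v₃ = 4) :
    Reducible G ({u, v, u₁, v₁, v₂, v₃} : Set V) 4 ∧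
      ∃ A : Set V, A.Nonempty ∧ A.ncard ≤ 6 ∧ Reducible G A 4 :=
  reducible_34edge_general G u v u₁ v₁ v₂ v₃ hdist huv htri₁ htri₂ hdu hdu₁ hdv hdv₁ hdv₂ hdv₃
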